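/- Any achievable rate pair satisfies, for every private receiver p, every superset-saturated Λ ⊆ 2^{I₁}, and every ε > 0: R₂ ≤ (1/n)·H(Xⁿ_Λ | W₁) + Σ_{S∈Λᶜ} |E_{S,p}| + ε. -/

import Mathlib

/-!
Chain of entropy inequalities, in nats:
`n R₂ log q = H(W₁,W₂) − H(W₁) ≤ H(W₁,W₂,Yⁿ_p) − H(W₁) ≤ H(W₁,Yⁿ_p) − H(W₁) + n ε log q`
by monotonicity and Fano. The observation `(W₁, Yⁿ_p)` is a function of `(Xⁿ_Λ, W₁)` together
with the private symbols on the classes outside `Λ`, and the latter take at most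
`q ^ (n Σ_{S ∉ Λ} |E_{S,p}|)` values, so `H(W₁,Yⁿ_p) ≤ H(Xⁿ_Λ,W₁) + n Σ_{S ∉ Λ} |E_{S,p}| log q`.
-/

/-- Shannon entropy (in nats) of a finite-valued random variable on a finite probability
space with mass function `pr`. -/
noncomputable def ent {Ω β : Type*} [Fintype Ω] [Fintype β] [DecidableEq β]
    (pr : Ω → ℝ) (f : Ω → β) : ℝ :=
  ∑ b : β, Real.negMulLog (∑ ω ∈ Finset.univ.filter fun ω => f ω = b, pr ω)

/-- A superset-saturated family of subsets of the public receiver index set. -/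
def Saturated {m : ℕ} (Λ : Finset (Finset (Fin m))) : Prop :=
  ∀ S ∈ Λ, ∀ T : Finset (Fin m), S ⊆ T → T ∈ Λ

open Finset Real

lemma negMulLog_sum_le_sum_negMulLog {ι : Type*} (s : Finset ι) (x : ι → ℝ)
    (hx : ∀ i ∈ s, 0 ≤ x i) :
    negMulLog (∑ i ∈ s, x i) ≤ ∑ i ∈ s, negMulLog (x i) := by
  rw [negMulLog, neg_mul, sum_mul, ← sum_neg_distrib]
  refine sum_le_sum fun i hi => ?_
  rcases (hx i hi).eq_or_lt with h0 | h0
  · simp [← h0]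
  · rw [negMulLog, neg_mul, neg_le_neg_iff]
    exact mul_le_mul_of_nonneg_left (log_le_log h0 (single_le_sum hx hi)) (hx i hi)

/-- Jensen's inequality for the concave `negMulLog` with uniform weights `1 / #s`. -/
lemma sum_negMulLog_le_negMulLog_sum_add_mul_log_card {ι : Type*} (s : Finset ι) (x : ι → ℝ)
    (hx : ∀ i ∈ s, 0 ≤ x i) :
    ∑ i ∈ s, negMulLog (x i) ≤ negMulLog (∑ i ∈ s, x i) + (∑ i ∈ s, x i) * log #s := by
  rcases s.eq_empty_or_nonempty with rfl | hs
  · simp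
  have hN : (0 : ℝ) < #s := by exact_mod_cast hs.card_pos
  have jensen := concaveOn_negMulLog.le_map_sum (t := s) (w := fun _ => (#s : ℝ)⁻¹) (p := x)
    (fun _ _ => by positivity) (by simp [hN.ne']) hx
  simp only [smul_eq_mul, ← mul_sum] at jensen
  rw [mul_comm, negMulLog_mul, negMulLog, log_inv] at jensen
  have := mul_le_mul_of_nonneg_left jensen hN.le
  field_simp at this
  linarith

section Law

variable {Ω β γ : Type*} [Fintype Ω] [DecidableEq β] [DecidableEq γ]

def law (pr : Ω → ℝ) (f : Ω → β) (b : β) : ℝ :=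
  ∑ ω ∈ univ.filter fun ω => f ω = b, pr ω

lemma law_nonneg {pr : Ω → ℝ} (hpr : ∀ ω, 0 ≤ pr ω) (f : Ω → β) (b : β) : 0 ≤ law pr f b :=
  sum_nonneg fun ω _ => hpr ω

lemma ent_eq_sum_law [Fintype β] (pr : Ω → ℝ) (f : Ω → β) :
    ent pr f = ∑ b, negMulLog (law pr f b) :=
  rfl

lemma sum_law [Fintype β] (pr : Ω → ℝ) (f : Ω → β) : ∑ b, law pr f b = ∑ ω, pr ω :=
  sum_fiberwise_of_maps_to (fun ω _ => mem_univ (f ω)) pr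

lemma law_comp [Fintype β] (pr : Ω → ℝ) (f : Ω → β) (k : β → γ) (c : γ) :
    law pr (fun ω => k (f ω)) c = ∑ b ∈ univ.filter fun b => k b = c, law pr f b := by
  unfold law
  rw [← sum_fiberwise_of_maps_to (g := f) (t := univ.filter fun b => k b = c)
    (fun ω hω => by simpa using hω)]
  refine sum_congr rfl fun b hb => ?_
  rw [filter_filter]
  refine sum_congr (filter_congr fun ω _ => ?_) fun _ _ => rfl
  rw [mem_filter] at hb
  exact ⟨fun h => h.2, fun h => ⟨by simp only [h, hb.2], h⟩⟩

lemma law_fst [Fintype γ] (pr : Ω → ℝ) (f : Ω → β) (g : Ω → γ) (a : β) :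
    law pr f a = ∑ c, law pr (fun ω => (f ω, g ω)) (a, c) := by
  unfold law
  rw [← sum_fiberwise_of_maps_to (g := g) (fun ω _ => mem_univ (g ω))]
  simp only [filter_filter, Prod.ext_iff]

lemma ent_comp_le [Fintype β] [Fintype γ] {pr : Ω → ℝ} (hpr : ∀ ω, 0 ≤ pr ω) (f : Ω → β)
    (k : β → γ) :
    ent pr (fun ω => k (f ω)) ≤ ent pr f := by
  calc ent pr (fun ω => k (f ω))
      = ∑ c, negMulLog (∑ b ∈ univ.filter fun b => k b = c, law pr f b) := by
        simp only [ent_eq_sum_law, law_comp pr f k]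
    _ ≤ ∑ c, ∑ b ∈ univ.filter fun b => k b = c, negMulLog (law pr f b) :=
        sum_le_sum fun c _ => negMulLog_sum_le_sum_negMulLog _ _ fun b _ => law_nonneg hpr f b
    _ = ent pr f := sum_fiberwise_of_maps_to (fun b _ => mem_univ (k b)) _

lemma ent_le_of_eq_comp [Fintype β] [Fintype γ] {pr : Ω → ℝ} (hpr : ∀ ω, 0 ≤ pr ω) (f : Ω → β)
    (g : Ω → γ) (k : β → γ) (hg : ∀ ω, g ω = k (f ω)) : ent pr g ≤ ent pr f := by
  rw [show g = fun ω => k (f ω) from funext hg]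
  exact ent_comp_le hpr f k

/-- `DecidableEq (β × γ)` is left free: instance synthesis on a product of function types can
find one other than `instDecidableEqProd` (through `FinEnum`). -/
lemma ent_prod_le_add_log_card [Fintype β] [Fintype γ] [instPair : DecidableEq (β × γ)]
    {pr : Ω → ℝ} (hpr0 : ∀ ω, 0 ≤ pr ω) (hpr1 : ∑ ω, pr ω = 1) (f : Ω → β) (g : Ω → γ) :
    ent pr (fun ω => (f ω, g ω)) ≤ ent pr f + log (Fintype.card γ) := by
  obtain rfl : instPair = instDecidableEqProd := Subsingleton.elim _ _
  calc ent pr (fun ω => (f ω, g ω))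
      = ∑ a, ∑ c, negMulLog (law pr (fun ω => (f ω, g ω)) (a, c)) := by
        rw [ent_eq_sum_law, Fintype.sum_prod_type]
    _ ≤ ∑ a, (negMulLog (law pr f a) + law pr f a * log (Fintype.card γ)) := by
        refine sum_le_sum fun a _ => ?_
        rw [law_fst pr f g a]
        exact sum_negMulLog_le_negMulLog_sum_add_mul_log_card _ _ fun c _ => law_nonneg hpr0 _ _
    _ = ent pr f + log (Fintype.card γ) := by
        rw [sum_add_distrib, ← sum_mul, sum_law, hpr1, one_mul, ent_eq_sum_law]

end Law

lemma log_card_blocks {ι : Type*} [DecidableEq ι] (T : Finset ι) (e : ι → ℕ) (n q : ℕ) :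
    log (Fintype.card ((i : T) → Fin (e i) → Fin n → Fin q)) =
      (∑ i ∈ T, (e i : ℝ)) * n * log q := by
  simp only [Fintype.card_pi, Fintype.card_fin, prod_const, card_univ,
    ← pow_mul, prod_pow_eq_pow_sum]
  rw [Nat.cast_pow, log_pow, sum_coe_sort T fun i => n * e i]
  push_cast
  rw [← mul_sum, mul_comm (n : ℝ)]

lemma le_one_div_mul_div_add_add_of_mul_le {R x s ε n L : ℝ} (hn : 0 < n) (hL : 0 < L)
    (h : n * R * L ≤ x + s * n * L + n * ε * L) :
    R ≤ 1 / n * (x / L) + s + ε := by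
  rw [show 1 / n * (x / L) + s + ε = (x + s * n * L + n * ε * L) / (n * L) by field_simp,
    le_div_iff₀ (by positivity)]
  linarith

theorem stmt19_general {m : ℕ} {Ω : Type} [Fintype Ω]
    (pr : Ω → ℝ) (hpr0 : ∀ ω, 0 ≤ pr ω) (hpr1 : ∑ ω, pr ω = 1)
    (n q M1 M2 : ℕ) (hn : 0 < n) (hq : 1 < q)
    (E Ep : Finset (Fin m) → ℕ) (hEpE : ∀ S, Ep S ≤ E S)
    (R2 ε : ℝ)
    (W1 : Ω → Fin M1) (W2 : Ω → Fin M2)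
    (X : (S : Finset (Fin m)) → Ω → (Fin (E S) → Fin n → Fin q))
    -- W₂ independent of W₁, uniform of rate R₂ : H(W₂ | W₁) = n R₂ log q
    (hR2 : ent pr (fun ω => (W1 ω, W2 ω)) - ent pr W1 = n * R2 * Real.log q)
    -- Fano at private receiver p : H(W₂ | W₁, Yⁿ_p) ≤ n ε log q, where
    -- Yⁿ_p = (Xⁿ_{S,p})_S is the private receiver's observation
    (hFano : ent pr (fun ω => (W1 ω, W2 ω,
          (fun S (k : Fin (Ep S)) => X S ω (Fin.castLE (hEpE S) k) :
            (S : Finset (Fin m)) → Fin (Ep S) → Fin n → Fin q)))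
        - ent pr (fun ω => (W1 ω,
          (fun S (k : Fin (Ep S)) => X S ω (Fin.castLE (hEpE S) k) :
            (S : Finset (Fin m)) → Fin (Ep S) → Fin n → Fin q)))
        ≤ n * ε * Real.log q) :
    ∀ Λ : Finset (Finset (Fin m)), Saturated Λ →
      R2 ≤ (1 / n) *
          ((ent pr (fun ω => ((fun S : {S : Finset (Fin m) // S ∈ Λ} => X S.1 ω), W1 ω))
              - ent pr W1) / Real.log q)
        + (∑ S ∈ Λᶜ, (Ep S : ℝ)) + ε := by
  intro Λ _
  set Y := fun ω S (k : Fin (Ep S)) => X S ω (Fin.castLE (hEpE S) k)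
  set A := fun ω => ((fun S : {S : Finset (Fin m) // S ∈ Λ} => X S.1 ω), W1 ω)
  set YΛc := fun ω (S : {S : Finset (Fin m) // S ∈ Λᶜ}) (k : Fin (Ep S.1)) =>
    X S.1 ω (Fin.castLE (hEpE S.1) k)
  have hmono : ent pr (fun ω => (W1 ω, W2 ω)) ≤ ent pr (fun ω => (W1 ω, W2 ω, Y ω)) :=
    ent_comp_le hpr0 (fun ω => (W1 ω, W2 ω, Y ω)) fun t => (t.1, t.2.1)
  have hFano' : ent pr (fun ω => (W1 ω, W2 ω, Y ω)) - ent pr (fun ω => (W1 ω, Y ω))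
      ≤ n * ε * log q := hFano
  have hsplit : ent pr (fun ω => (W1 ω, Y ω)) ≤ ent pr (fun ω => (A ω, YΛc ω)) := by
    refine ent_le_of_eq_comp hpr0 _ _ (fun t => (t.1.2, fun S k =>
        if h : S ∈ Λ then t.1.1 ⟨S, h⟩ (Fin.castLE (hEpE S) k)
        else t.2 ⟨S, mem_compl.mpr h⟩ k)) fun ω => ?_
    ext S k : 3
    · rfl
    · by_cases h : S ∈ Λ <;> simp [h, Y, A, YΛc]
  have hcard := ent_prod_le_add_log_card hpr0 hpr1 A YΛc
  rw [log_card_blocks] at hcard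
  have hL : 0 < log q := log_pos (by exact_mod_cast hq)
  refine le_one_div_mul_div_add_add_of_mul_le (by exact_mod_cast hn) hL ?_
  calc (n : ℝ) * R2 * log q
      = ent pr (fun ω => (W1 ω, W2 ω)) - ent pr W1 := hR2.symm
    _ ≤ ent pr (fun ω => (W1 ω, Y ω)) - ent pr W1 + n * ε * log q := by
        linarith only [hmono, hFano']
    _ ≤ ent pr A + (∑ S ∈ Λᶜ, (Ep S : ℝ)) * n * log q - ent pr W1 + n * ε * log q := by
        linarith only [hsplit, hcard]
    _ = _ := by ring

/-- for any code over the combination network, a private receiver `p`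
(observing the first `Ep S` of the `E S` edges of each class `S`) that decodes `(W₁,W₂)`
with Fano error `ε` forces, for every superset-saturated `Λ ⊆ 2^{I₁}`,
`R₂ ≤ (1/n)·H(Xⁿ_Λ | W₁) + Σ_{S∈Λᶜ} |E_{S,p}| + ε`.
Rates and entropies are in units of `log q`; `H(A|W₁) = H(A,W₁) − H(W₁)`. -/
theorem stmt19 {m : ℕ} {Ω : Type} [Fintype Ω]
    (pr : Ω → ℝ) (hpr0 : ∀ ω, 0 ≤ pr ω) (hpr1 : ∑ ω, pr ω = 1)
    (n q M1 M2 : ℕ) (hn : 0 < n) (hq : 1 < q)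
    (E Ep : Finset (Fin m) → ℕ) (hEpE : ∀ S, Ep S ≤ E S)
    (R2 ε : ℝ) (hε : 0 ≤ ε)
    (W1 : Ω → Fin M1) (W2 : Ω → Fin M2)
    (X : (S : Finset (Fin m)) → Ω → (Fin (E S) → Fin n → Fin q))
    -- W₂ independent of W₁, uniform of rate R₂ : H(W₂ | W₁) = n R₂ log q
    (hR2 : ent pr (fun ω => (W1 ω, W2 ω)) - ent pr W1 = n * R2 * Real.log q)
    -- Fano at private receiver p : H(W₂ | W₁, Yⁿ_p) ≤ n ε log q, where
    -- Yⁿ_p = (Xⁿ_{S,p})_S is the private receiver's observation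
    (hFano : ent pr (fun ω => (W1 ω, W2 ω,
          (fun S (k : Fin (Ep S)) => X S ω (Fin.castLE (hEpE S) k) :
            (S : Finset (Fin m)) → Fin (Ep S) → Fin n → Fin q)))
        - ent pr (fun ω => (W1 ω,
          (fun S (k : Fin (Ep S)) => X S ω (Fin.castLE (hEpE S) k) :
            (S : Finset (Fin m)) → Fin (Ep S) → Fin n → Fin q)))
        ≤ n * ε * Real.log q) :
    ∀ Λ : Finset (Finset (Fin m)), Saturated Λ →
      R2 ≤ (1 / n) *
          ((ent pr (fun ω => ((fun S : {S : Finset (Fin m) // S ∈ Λ} => X S.1 ω), W1 ω))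
              - ent pr W1) / Real.log q)
        + (∑ S ∈ Λᶜ, (Ep S : ℝ)) + ε :=
  stmt19_general pr hpr0 hpr1 n q M1 M2 hn hq E Ep hEpE R2 ε W1 W2 X hR2 hFano
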